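/- Let μ be a Borel probability measure on Cantor space 2^ω, let A ⊆ 2^ω and s ∈ [0,1). Then: (1) μ_*(A^c) > s if and only if player I has a winning strategy in the measure game G(s,A); and (2) μ*(A^c) ≤ s if and only if player II has a winning strategy in G(s,A). -/

import Mathlib

/-!
Write `m_t` for the value player I assigns to the node `t`.

If `F ⊆ Aᶜ` is closed with `μ(F) > s`, player I starts with `m_∅ ∈ (s, μ(F))` and splits so that
`m_t < μ(N_t ∩ F)` whenever `m_t > 0`; a play on which II stays legal then meets `F` in every
cylinder, hence lies in `F`. If `U ⊇ Aᶜ` is open with `μ(U) < m_∅`, player II keeps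
`μ(N_t ∩ U) < m_t`: this keeps her moves legal, and a play in `U` would enter a cylinder
`N_t ⊆ U`, where `m_t ≤ μ(N_t)` is impossible.

Conversely, winning strategies give closed sets through one estimate: if `w(t) ≤ μ(N_t)` and
`w(t) ≤ w(t⌢0) + w(t⌢1) + ε 4^{-|t|}`, the branches along which `w` never vanishes form a closed
set of measure at least `w(∅) - 2ε`. For a winning strategy of I take `w(t) = m_t` as long as II
has played legally; `w` is additive and its branches avoid `A`. For a winning strategy `τ` of II,
player I builds a tree of positions with `m_∅` just above `s` and takes `w(t) = μ(N_t) - m_t` on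
it. Here `τ` never selects a zero value, since I could go on legally and II would have lost; so at
each node I can offer splits that `τ` answers with either child, close enough that the gaps of the
children kept add up to the parent's gap up to `ε 4^{-|t|}`. The branches form a closed subset
of `A` of measure almost `1 - s`, whose complement is an open cover of `Aᶜ` of measure almost `s`.
-/

open MeasureTheory

namespace MeasureGame

/-- Cantor space `2^ω`. -/
abbrev Cantor : Type := ℕ → Bool

/-- The basic cylinder set `N_t` determined by a finite binary string `t`. -/
def cyl (t : List Bool) : Set Cantor := {x | ∀ i : Fin t.length, x i.1 = t.get i}

/-- A round of the measure game: player I's pair of rationals, then player II's bit. -/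
abbrev GRound : Type := (ℚ × ℚ) × Bool

/-- A strategy for player I in the measure game. -/
abbrev StratI : Type := List GRound → ℚ × ℚ

/-- A strategy for player II in the measure game. -/
abbrev StratII : Type := List GRound → ℚ × ℚ → Bool

/-- A run of the measure game. -/
abbrev Run : Type := ℕ → GRound

/-- The history (list of completed rounds) before round `n`. -/
def hist (r : Run) (n : ℕ) : List GRound := (List.range n).map r

/-- Player II's bit at round `n`. -/
def bits (r : Run) (n : ℕ) : Bool := (r n).2

/-- The finite binary string of player II's first `n` bits. -/
def path (r : Run) (n : ℕ) : List Bool := (List.range n).map (bits r)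

/-- The value player I assigned at round `n` to the one-bit extension of the current path by `b`. -/
def valI (r : Run) (n : ℕ) (b : Bool) : ℚ := if b then (r n).1.2 else (r n).1.1

/-- The value selected by player II's move at round `n`. -/
def sel (r : Run) (n : ℕ) : ℚ := valI r n (bits r n)

/-- Legality requirements on the single value player I assigned to `path r n ++ [b]`:
it is nonnegative, at most `μ(N_{t⌢b})`, and strictly below it when the latter is positive. -/
def mOK (μ : Measure Cantor) (r : Run) (n : ℕ) (b : Bool) : Prop :=
  0 ≤ valI r n b ∧ ((valI r n b : ℝ) ≤ (μ (cyl (path r n ++ [b]))).toReal) ∧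
    (0 < (μ (cyl (path r n ++ [b]))).toReal → (valI r n b : ℝ) < (μ (cyl (path r n ++ [b]))).toReal)

/-- Player I's move at round `n` of a run is legal (for the game `G(s, ·)`). -/
def IOK (μ : Measure Cantor) (s : ℝ) (r : Run) : ℕ → Prop
  | 0 => mOK μ r 0 false ∧ mOK μ r 0 true ∧ s < ((r 0).1.1 : ℝ) + ((r 0).1.2 : ℝ)
  | (n + 1) => mOK μ r (n + 1) false ∧ mOK μ r (n + 1) true ∧
      (r (n + 1)).1.1 + (r (n + 1)).1.2 = sel r n

/-- Player II's move at round `n` of a run is legal: the selected value is nonzero. -/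
def IIOK (r : Run) (n : ℕ) : Prop := sel r n ≠ 0

/-- The run `r` is consistent with player I's strategy `σ`. -/
def ConsI (σ : StratI) (r : Run) : Prop := ∀ n, (r n).1 = σ (hist r n)

/-- The run `r` is consistent with player II's strategy `τ`. -/
def ConsII (τ : StratII) (r : Run) : Prop := ∀ n, (r n).2 = τ (hist r n) (r n).1

/-- Player II wins the run `r` of `G(s, A)`: either player I is the first to break a rule,
or all rules are followed and the sequence of II's bits belongs to `A`. -/
def IIWinsRun (μ : Measure Cantor) (s : ℝ) (A : Set Cantor) (r : Run) : Prop :=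
  (∃ n, (∀ m < n, IOK μ s r m ∧ IIOK r m) ∧ ¬ IOK μ s r n) ∨
    ((∀ n, IOK μ s r n ∧ IIOK r n) ∧ bits r ∈ A)

/-- Player I has a winning strategy in the measure game `G(s, A)`. -/
def WinsI (μ : Measure Cantor) (s : ℝ) (A : Set Cantor) : Prop :=
  ∃ σ : StratI, ∀ r : Run, ConsI σ r → ¬ IIWinsRun μ s A r

/-- Player II has a winning strategy in the measure game `G(s, A)`. -/
def WinsII (μ : Measure Cantor) (s : ℝ) (A : Set Cantor) : Prop :=
  ∃ τ : StratII, ∀ r : Run, ConsII τ r → IIWinsRun μ s A r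

/-- The outer measure `μ*(A) = inf {μ(U) : U open, A ⊆ U}`. -/
noncomputable def outerM (μ : Measure Cantor) (A : Set Cantor) : ℝ :=
  sInf {v : ℝ | ∃ U : Set Cantor, IsOpen U ∧ A ⊆ U ∧ v = (μ U).toReal}

/-- The inner measure `μ_*(A) = sup {μ(F) : F closed, F ⊆ A}`. -/
noncomputable def innerM (μ : Measure Cantor) (A : Set Cantor) : ℝ :=
  sSup {v : ℝ | ∃ F : Set Cantor, IsClosed F ∧ F ⊆ A ∧ v = (μ F).toReal}

/-! ### Cylinders -/

def seg (x : Cantor) (n : ℕ) : List Bool := (List.range n).map x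

@[simp] lemma length_seg (x : Cantor) (n : ℕ) : (seg x n).length = n := by simp [seg]

@[simp] lemma seg_zero (x : Cantor) : seg x 0 = [] := rfl

lemma seg_succ (x : Cantor) (n : ℕ) : seg x (n + 1) = seg x n ++ [x n] := by
  simp [seg, List.range_succ]

lemma seg_congr {x y : Cantor} {n : ℕ} (h : ∀ i < n, x i = y i) : seg x n = seg y n :=
  List.map_congr_left fun i hi => h i (List.mem_range.1 hi)

lemma seg_update_succ (x : Cantor) (n : ℕ) (b : Bool) :
    seg (Function.update x n b) (n + 1) = seg x n ++ [b] := by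
  rw [seg_succ, Function.update_self,
    seg_congr fun i hi => Function.update_of_ne (Nat.ne_of_lt hi) _ _]

lemma mem_cyl_iff_seg_eq {t : List Bool} {x : Cantor} : x ∈ cyl t ↔ seg x t.length = t := by
  constructor
  · intro h
    refine List.ext_getElem (by simp) fun i h₁ h₂ => ?_
    simp only [seg, List.getElem_map, List.getElem_range]
    exact h ⟨i, h₂⟩
  · rintro h ⟨i, hi⟩
    simpa [seg] using List.getElem_of_eq h (by simpa using hi)

lemma seg_eq_seg_iff {x y : Cantor} {n : ℕ} : seg x n = seg y n ↔ ∀ i < n, x i = y i := by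
  simp [seg, List.map_inj_left]

lemma mem_cyl_seg_iff {x y : Cantor} {n : ℕ} : y ∈ cyl (seg x n) ↔ ∀ i < n, y i = x i := by
  rw [mem_cyl_iff_seg_eq, length_seg, seg_eq_seg_iff]

lemma mem_cyl_seg (x : Cantor) (n : ℕ) : x ∈ cyl (seg x n) :=
  mem_cyl_seg_iff.2 fun _ _ => rfl

@[simp] lemma cyl_nil : cyl [] = Set.univ := by
  ext x; simp [mem_cyl_iff_seg_eq]

lemma mem_cyl_append {t : List Bool} {b : Bool} {x : Cantor} :
    x ∈ cyl (t ++ [b]) ↔ x ∈ cyl t ∧ x t.length = b := by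
  simp [mem_cyl_iff_seg_eq, seg_succ]

lemma cyl_seg_succ_subset (x : Cantor) (n : ℕ) : cyl (seg x (n + 1)) ⊆ cyl (seg x n) := by
  rw [seg_succ]
  exact fun y hy => (mem_cyl_append.1 hy).1

lemma cyl_eq_union (t : List Bool) : cyl t = cyl (t ++ [false]) ∪ cyl (t ++ [true]) := by
  ext x
  simp only [Set.mem_union, mem_cyl_append]
  cases x t.length <;> simp

lemma disjoint_cyl_append (t : List Bool) : Disjoint (cyl (t ++ [false])) (cyl (t ++ [true])) := by
  rw [Set.disjoint_left]
  intro x h₀ h₁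
  simp only [mem_cyl_append] at h₀ h₁
  simp [h₀.2] at h₁

lemma isOpen_setOf_of_dependsOn {P : Cantor → Prop} {n : ℕ} (hP : DependsOn P (Set.Iio n)) :
    IsOpen {x | P x} := by
  have hcyl : ∀ x : Cantor, IsOpen (cyl (seg x n)) := by
    intro x
    have : cyl (seg x n) = ⋂ i ∈ Finset.range n, (fun y : Cantor => y i) ⁻¹' {x i} := by
      ext y; simp [mem_cyl_seg_iff]
    rw [this]
    exact isOpen_biInter_finset fun i _ => (isOpen_discrete _).preimage (continuous_apply i)
  rw [isOpen_iff_forall_mem_open]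
  refine fun x hx => ⟨cyl (seg x n), fun y hy => ?_, hcyl x, mem_cyl_seg x n⟩
  rw [Set.mem_ofPred_eq, hP fun i hi => mem_cyl_seg_iff.1 hy i hi]
  exact hx

lemma isClopen_setOf_of_dependsOn {P : Cantor → Prop} {n : ℕ} (hP : DependsOn P (Set.Iio n)) :
    IsClopen {x | P x} :=
  ⟨isOpen_compl_iff.1 (isOpen_setOf_of_dependsOn (n := n) fun x y h => by simp [hP h]),
    isOpen_setOf_of_dependsOn hP⟩

lemma dependsOn_mem_cyl (t : List Bool) : DependsOn (· ∈ cyl t) (Set.Iio t.length) := by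
  intro x y h
  simp only [mem_cyl_iff_seg_eq, seg_congr fun i hi => h i hi]

lemma measurableSet_cyl (t : List Bool) : MeasurableSet (cyl t) :=
  (isClopen_setOf_of_dependsOn (dependsOn_mem_cyl t)).isClosed.measurableSet

lemma exists_cyl_seg_subset {U : Set Cantor} (hU : IsOpen U) {x : Cantor} (hx : x ∈ U) :
    ∃ n, cyl (seg x n) ⊆ U := by
  obtain ⟨I, u, hu, hsub⟩ := isOpen_pi_iff.1 hU x hx
  obtain ⟨N, hN⟩ := I.bddAbove
  refine ⟨N + 1, fun y hy => hsub fun i hi => ?_⟩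
  rw [mem_cyl_seg_iff.1 hy i (Nat.lt_succ_of_le (hN hi))]
  exact (hu i hi).2

lemma mem_of_forall_cyl_inter_nonempty {F : Set Cantor} (hF : IsClosed F) {x : Cantor}
    (h : ∀ n, (cyl (seg x n) ∩ F).Nonempty) : x ∈ F := by
  by_contra hx
  obtain ⟨n, hn⟩ := exists_cyl_seg_subset hF.isOpen_compl hx
  obtain ⟨y, hy, hyF⟩ := h n
  exact hn hy hyF

lemma measureReal_cyl_inter (μ : Measure Cantor) [IsFiniteMeasure μ] (t : List Bool)
    {V : Set Cantor} (hV : MeasurableSet V) :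
    μ.real (cyl t ∩ V) = μ.real (cyl (t ++ [false]) ∩ V) + μ.real (cyl (t ++ [true]) ∩ V) := by
  rw [cyl_eq_union t, Set.union_inter_distrib_right]
  exact measureReal_union ((disjoint_cyl_append t).mono Set.inter_subset_left
    Set.inter_subset_left) ((measurableSet_cyl _).inter hV)

lemma measureReal_cyl (μ : Measure Cantor) [IsFiniteMeasure μ] (t : List Bool) :
    μ.real (cyl t) = μ.real (cyl (t ++ [false])) + μ.real (cyl (t ++ [true])) := by
  simpa using measureReal_cyl_inter μ t MeasurableSet.univ

/-! ### Branches of a tree of cylinders -/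

theorem isClosed_setOf_forall_ne_zero {W : ℕ → Cantor → ℝ}
    (hdep : ∀ n, DependsOn (W n) (Set.Iio n)) : IsClosed {x | ∀ n, W n x ≠ 0} := by
  simp only [Set.ofPred_forall]
  exact isClosed_iInter fun n =>
    (isClopen_setOf_of_dependsOn (n := n) fun x y h => by rw [hdep n h]).isClosed

section Tree

variable (μ : Measure Cantor) [IsFiniteMeasure μ] (W : ℕ → Cantor → ℝ) {ε : ℝ}

theorem sub_le_measureReal_cyl_inter (hε : 0 ≤ ε) (hdep : ∀ n, DependsOn (W n) (Set.Iio n))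
    (hle : ∀ n x, W n x ≤ μ.real (cyl (seg x n)))
    (hsplit : ∀ n x y, (∀ i < n, x i = y i) → x n = false → y n = true →
      W n x ≤ W (n + 1) x + W (n + 1) y + ε / 4 ^ n) (j : ℕ) :
    ∀ k x, W k x - 2 * ε / 4 ^ k ≤ μ.real (cyl (seg x k) ∩ {y | W (k + j) y ≠ 0}) := by
  induction j with
  | zero =>
    intro k x
    simp only [Nat.add_zero]
    have hε' : 0 ≤ 2 * ε / 4 ^ k := by positivity
    by_cases hx : W k x = 0
    · linarith [measureReal_nonneg (μ := μ) (s := cyl (seg x k) ∩ {y | W k y ≠ 0})]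
    · have : cyl (seg x k) ⊆ {y | W k y ≠ 0} := fun y hy => by
        rwa [Set.mem_ofPred_eq, hdep k fun i hi => mem_cyl_seg_iff.1 hy i hi]
      rw [Set.inter_eq_left.2 this]
      linarith [hle k x]
  | succ j ih =>
    intro k x
    have hC : MeasurableSet {y | W (k + (j + 1)) y ≠ 0} :=
      (isClopen_setOf_of_dependsOn fun y z h => by rw [hdep _ h]).isClosed.measurableSet
    have h₀ := ih (k + 1) (Function.update x k false)
    have h₁ := ih (k + 1) (Function.update x k true)
    have hs := hsplit k (Function.update x k false) (Function.update x k true)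
      (fun i hi => by simp [Function.update_of_ne (Nat.ne_of_lt hi)]) (by simp) (by simp)
    rw [hdep k fun i hi => Function.update_of_ne (Nat.ne_of_lt hi) _ _] at hs
    rw [seg_update_succ, add_right_comm] at h₀ h₁
    rw [measureReal_cyl_inter μ _ hC, ← add_assoc]
    -- the budget `2ε/4^k` pays for the slack `ε/4^k` and for the budgets of both children
    have e₁ : 2 * ε / 4 ^ (k + 1) = ε / 4 ^ k / 2 := by rw [pow_succ]; ring
    have e₂ : 2 * ε / 4 ^ k = 2 * (ε / 4 ^ k) := by ring
    linarith

theorem sub_le_measureReal_setOf_forall_ne_zero (hε : 0 ≤ ε)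
    (hdep : ∀ n, DependsOn (W n) (Set.Iio n))
    (hle : ∀ n x, W n x ≤ μ.real (cyl (seg x n)))
    (hsplit : ∀ n x y, (∀ i < n, x i = y i) → x n = false → y n = true →
      W n x ≤ W (n + 1) x + W (n + 1) y + ε / 4 ^ n)
    (hpar : ∀ n x, W (n + 1) x ≠ 0 → W n x ≠ 0) (x : Cantor) :
    W 0 x - 2 * ε ≤ μ.real {y | ∀ n, W n y ≠ 0} := by
  set C : ℕ → Set Cantor := fun n => {y | W n y ≠ 0}
  have hC : ∀ n, MeasurableSet (C n) := fun n =>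
    (isClopen_setOf_of_dependsOn (n := n) fun y z h => by rw [hdep n h]).isClosed.measurableSet
  have hlim := tendsto_measure_iInter_atTop (μ := μ) (fun n => (hC n).nullMeasurableSet)
    (antitone_nat_of_succ_le fun n y hy => hpar n y hy) ⟨0, measure_ne_top μ _⟩
  have hF : {y | ∀ n, W n y ≠ 0} = ⋂ n, C n := by ext; simp [C]
  rw [hF]
  refine ge_of_tendsto' ((ENNReal.tendsto_toReal (measure_ne_top μ _)).comp hlim) fun n => ?_
  simpa [C, measureReal_def] using sub_le_measureReal_cyl_inter μ W hε hdep hle hsplit n 0 x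

end Tree

/-! ### Legal splits -/

def pick (b : Bool) (c : ℚ × ℚ) : ℚ := if b then c.2 else c.1

@[simp] lemma pick_false (c : ℚ × ℚ) : pick false c = c.1 := rfl

@[simp] lemma pick_true (c : ℚ × ℚ) : pick true c = c.2 := rfl

def LegalValue (v : ℚ) (M : ℝ) : Prop := 0 ≤ v ∧ (v : ℝ) ≤ M ∧ (0 < M → (v : ℝ) < M)

def Admissible (M : ℝ) (m : ℚ) : Prop := 0 ≤ m ∧ (0 < m → (m : ℝ) < M)

def LegalSplit (M : Bool → ℝ) (m : ℚ) (c : ℚ × ℚ) : Prop :=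
  c.1 + c.2 = m ∧ ∀ b, LegalValue (pick b c) (M b)

section LegalSplit

variable {v m : ℚ} {M M' : ℝ} {N N' : Bool → ℝ} {c : ℚ × ℚ}

lemma legalValue_zero (hM : 0 ≤ M) : LegalValue 0 M :=
  ⟨le_rfl, by simpa using hM, by simp⟩

lemma legalValue_of_lt (hv : 0 ≤ v) (h : (v : ℝ) < M) : LegalValue v M :=
  ⟨hv, h.le, fun _ => h⟩

lemma LegalValue.lt_of_pos (h : LegalValue v M) (hv : 0 < v) : (v : ℝ) < M :=
  h.2.2 (lt_of_lt_of_le (by exact_mod_cast hv) h.2.1)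

lemma LegalValue.admissible (h : LegalValue v M) : Admissible M v :=
  ⟨h.1, h.lt_of_pos⟩

lemma LegalValue.mono (h : LegalValue v M) (hM : M ≤ M') : LegalValue v M' := by
  refine ⟨h.1, h.2.1.trans hM, fun hM' => ?_⟩
  rcases h.1.lt_or_eq with hv | hv
  · exact (h.lt_of_pos hv).trans_le hM
  · simpa [← hv] using hM'

lemma LegalSplit.mono (h : LegalSplit N m c) (hN : ∀ b, N b ≤ N' b) : LegalSplit N' m c :=
  ⟨h.1, fun b => (h.2 b).mono (hN b)⟩

lemma LegalSplit.add_le (h : LegalSplit N m c) : (m : ℝ) ≤ N false + N true := by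
  have h₀ := (h.2 false).2.1
  have h₁ := (h.2 true).2.1
  rw [← h.1]
  push_cast
  simp only [pick_false, pick_true] at h₀ h₁
  linarith

lemma LegalSplit.pos {b : Bool} (h : LegalSplit N m c) (hb : 0 < pick b c) : 0 < m := by
  have h₀ := (h.2 false).1
  have h₁ := (h.2 true).1
  rw [← h.1]
  cases b <;> simp only [pick_false, pick_true] at h₀ h₁ hb <;> linarith

lemma LegalSplit.lt_add {b : Bool} (h : LegalSplit N m c) (hb : 0 < pick b c) :
    (m : ℝ) < N false + N true := by
  have h₀ := (h.2 false).2.1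
  have h₁ := (h.2 true).2.1
  have hlt := (h.2 b).lt_of_pos hb
  rw [← h.1]
  push_cast
  cases b <;> simp only [pick_false, pick_true] at h₀ h₁ hlt <;> linarith

lemma legalSplit_of_lt {q : ℚ} (hL : max 0 ((m : ℝ) - N true) < q)
    (hU : (q : ℝ) < min (m : ℝ) (N false)) : LegalSplit N m (q, m - q) := by
  rw [max_lt_iff] at hL
  rw [lt_min_iff] at hU
  refine ⟨by ring, fun b => ?_⟩
  cases b
  · exact legalValue_of_lt (by exact_mod_cast hL.1.le) hU.2
  · show LegalValue (m - q) (N true)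
    refine legalValue_of_lt ?_ (by push_cast; linarith)
    have : (q : ℝ) ≤ m := hU.1.le
    exact_mod_cast (sub_nonneg.2 (by exact_mod_cast this))

lemma legalSplit_left (hN : 0 ≤ N false) (hm : 0 ≤ m) (h : (m : ℝ) < N true) :
    LegalSplit N m (0, m) :=
  ⟨by simp, fun b => by cases b; exacts [legalValue_zero hN, legalValue_of_lt hm h]⟩

lemma legalSplit_right (hN : 0 ≤ N true) (hm : 0 ≤ m) (h : (m : ℝ) < N false) :
    LegalSplit N m (m, 0) :=
  ⟨by simp, fun b => by cases b; exacts [legalValue_of_lt hm h, legalValue_zero hN]⟩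

lemma exists_legalSplit (hN : ∀ b, 0 ≤ N b) (hm : Admissible (N false + N true) m) :
    ∃ c, LegalSplit N m c := by
  obtain ⟨hm₀, hmN⟩ := hm
  by_cases h₁ : (m : ℝ) < N true
  · exact ⟨_, legalSplit_left (hN false) hm₀ h₁⟩
  by_cases h₀ : (m : ℝ) < N false
  · exact ⟨_, legalSplit_right (hN true) hm₀ h₀⟩
  push Not at h₀ h₁
  rcases hm₀.lt_or_eq with hpos | rfl
  · have := hmN hpos
    obtain ⟨q, hq₁, hq₂⟩ := exists_rat_btwn
      (show max 0 ((m : ℝ) - N true) < min (m : ℝ) (N false) by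
        apply max_lt <;> apply lt_min <;> linarith [hN false, hN true])
    exact ⟨_, legalSplit_of_lt hq₁ hq₂⟩
  · exact ⟨(0, 0), ⟨by simp, fun b => by cases b <;> exact legalValue_zero (hN _)⟩⟩

end LegalSplit

lemma exists_close_pair {P Q : ℝ → Prop} {L U δ : ℝ} (hP : P L) (hQ : Q U) (hδ : 0 < δ)
    (hPQ : ∀ q : ℚ, L < q → (q : ℝ) < U → P q ∨ Q q) : ∃ x y, P x ∧ Q y ∧ y ≤ x + δ := by
  by_cases hLU : U ≤ L + δ
  · exact ⟨L, U, hP, hQ, hLU⟩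
  set S := {x | P x ∧ x ≤ U}
  have hSb : BddAbove S := ⟨U, fun x hx => hx.2⟩
  have hL : L ≤ sSup S := le_csSup hSb ⟨hP, by linarith⟩
  obtain ⟨x, hxS, hx⟩ := exists_lt_of_lt_csSup (s := S) ⟨L, hP, by linarith⟩
    (sub_lt_self (sSup S) (half_pos hδ))
  by_cases hxU : U ≤ x + δ
  · exact ⟨x, U, hxS.1, hQ, hxU⟩
  obtain ⟨q, hq₁, hq₂⟩ := exists_rat_btwn (lt_add_of_pos_right (sSup S) (half_pos hδ))
  rcases hPQ q (by linarith) (by linarith) with hq | hq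
  · exact absurd (le_csSup hSb ⟨hq, by linarith⟩) (not_le.2 hq₁)
  · exact ⟨x, q, hxS.1, hq, by linarith⟩

/-- For each child `b ∈ p.1`, `p.2 b` is a legal split that `g` answers with `b`; the gaps
`N b - pick b (p.2 b)` of these children add up to the gap `N false + N true - m` up to `δ`. -/
def GoodSplits (N : Bool → ℝ) (m : ℚ) (g : ℚ × ℚ → Bool) (δ : ℝ)
    (p : Finset Bool × (Bool → ℚ × ℚ)) : Prop :=
  (∀ b ∈ p.1, g (p.2 b) = b ∧ LegalSplit N m (p.2 b)) ∧
    N false + N true - m - δ ≤ ∑ b ∈ p.1, (N b - pick b (p.2 b))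

theorem exists_goodSplits {N : Bool → ℝ} (hN : ∀ b, 0 ≤ N b) {m : ℚ} (hm : 0 < m)
    {g : ℚ × ℚ → Bool} (hg : ∀ c, LegalSplit N m c → 0 < pick (g c) c) {δ : ℝ} (hδ : 0 < δ) :
    ∃ p, GoodSplits N m g δ p := by
  -- `P` (resp. `Q`) holds at the left values of the legal splits answered with `true`
  -- (resp. `false`); the virtual points `m - N true` and `N false` stand for dropping that child
  set P : ℝ → Prop := fun x => (x = m - N true ∧ 0 ≤ (m : ℝ) - N true) ∨
    ∃ c, LegalSplit N m c ∧ g c = true ∧ (c.1 : ℝ) = x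
  set Q : ℝ → Prop := fun y => (y = N false ∧ N false ≤ m) ∨
    ∃ c, LegalSplit N m c ∧ g c = false ∧ (c.1 : ℝ) = y
  have hP : P (max 0 (m - N true)) := by
    rcases le_or_gt 0 ((m : ℝ) - N true) with h | h
    · exact Or.inl ⟨max_eq_right h, h⟩
    have hc := legalSplit_left (hN false) hm.le (by linarith)
    have := hg _ hc
    refine Or.inr ⟨_, hc, ?_, by simp [max_eq_left h.le]⟩
    revert this
    cases g (0, m) <;> simp
  have hQ : Q (min m (N false)) := by
    rcases le_or_gt (N false) m with h | h
    · exact Or.inl ⟨min_eq_right h, h⟩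
    have hc := legalSplit_right (hN true) hm.le h
    have := hg _ hc
    refine Or.inr ⟨_, hc, ?_, by simp [min_eq_left h.le]⟩
    revert this
    cases g (m, 0) <;> simp
  have hPQ : ∀ q : ℚ, max 0 ((m : ℝ) - N true) < q → (q : ℝ) < min (m : ℝ) (N false) →
      P q ∨ Q q := fun q hL hU => by
    have hc := legalSplit_of_lt hL hU
    cases hb : g (q, m - q)
    · exact Or.inr (Or.inr ⟨_, hc, hb, rfl⟩)
    · exact Or.inl (Or.inr ⟨_, hc, hb, rfl⟩)
  obtain ⟨x, y, hx, hy, hxy⟩ := exists_close_pair hP hQ hδ hPQ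
  rcases hx with ⟨rfl, -⟩ | ⟨c₁, hc₁, hg₁, rfl⟩ <;> rcases hy with ⟨rfl, -⟩ | ⟨c₀, hc₀, hg₀, rfl⟩
  · exact ⟨(∅, fun _ => 0), by simp, by simp; linarith⟩
  · exact ⟨({false}, fun _ => c₀), by simp [hg₀, hc₀], by simp; linarith⟩
  all_goals have hsum₁ : (c₁.1 : ℝ) + c₁.2 = m := by exact_mod_cast hc₁.1
  · exact ⟨({true}, fun _ => c₁), by simp [hg₁, hc₁], by simp; linarith⟩
  · refine ⟨(Finset.univ, fun b => if b then c₁ else c₀),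
      fun b _ => by cases b <;> simp [hg₀, hg₁, hc₀, hc₁], ?_⟩
    simp
    linarith

/-! ### Runs -/

section Game

variable {μ : Measure Cantor} {s : ℝ} {A : Set Cantor}

section Runs

variable {r r' : Run} {n : ℕ} {q₀ : ℚ}

@[simp] lemma length_hist (r : Run) (n : ℕ) : (hist r n).length = n := by simp [hist]

lemma hist_succ (r : Run) (n : ℕ) : hist r (n + 1) = hist r n ++ [r n] := by
  simp [hist, List.range_succ]

lemma path_eq_seg (r : Run) (n : ℕ) : path r n = seg (bits r) n := rfl

lemma path_succ (r : Run) (n : ℕ) : path r (n + 1) = path r n ++ [bits r n] := seg_succ _ _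

lemma sel_eq_pick (r : Run) (n : ℕ) : sel r n = pick (bits r n) (r n).1 := rfl

def nodeOf (h : List GRound) : List Bool := h.map Prod.snd

lemma nodeOf_hist (r : Run) (n : ℕ) : nodeOf (hist r n) = path r n := by
  simp [nodeOf, hist, path, bits, Function.comp_def]

def rootMass (r : Run) : ℚ := (r 0).1.1 + (r 0).1.2

/-- `m_t` at the node `t = path r n`, with `m_∅ := q₀`. -/
def mass (q₀ : ℚ) (r : Run) : ℕ → ℚ
  | 0 => q₀
  | n + 1 => sel r n

def histMass (q₀ : ℚ) (h : List GRound) : ℚ :=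
  match h.getLast? with
  | none => q₀
  | some a => pick a.2 a.1

lemma histMass_hist (q₀ : ℚ) (r : Run) (n : ℕ) : histMass q₀ (hist r n) = mass q₀ r n := by
  cases n with
  | zero => rfl
  | succ n => simp [histMass, hist_succ, mass, sel_eq_pick, bits]

noncomputable def childMeasure (μ : Measure Cantor) (t : List Bool) (b : Bool) : ℝ :=
  μ.real (cyl (t ++ [b]))

lemma childMeasure_nonneg (μ : Measure Cantor) (t : List Bool) (b : Bool) :
    0 ≤ childMeasure μ t b :=
  measureReal_nonneg

lemma childMeasure_add (μ : Measure Cantor) [IsFiniteMeasure μ] (t : List Bool) :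
    childMeasure μ t false + childMeasure μ t true = μ.real (cyl t) :=
  (measureReal_cyl μ t).symm

lemma IOK_of_legalSplit (h : LegalSplit (childMeasure μ (path r n)) (mass q₀ r n) (r n).1)
    (hs : s < q₀) : IOK μ s r n := by
  cases n with
  | zero => exact ⟨h.2 false, h.2 true, by rw [show q₀ = _ from h.1.symm] at hs; exact_mod_cast hs⟩
  | succ n => exact ⟨h.2 false, h.2 true, h.1⟩

lemma IOK.legalSplit (h : IOK μ s r n) :
    LegalSplit (childMeasure μ (path r n)) (mass (rootMass r) r n) (r n).1 := by
  cases n with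
  | zero => exact ⟨rfl, fun b => by cases b; exacts [h.1, h.2.1]⟩
  | succ n => exact ⟨h.2.2, fun b => by cases b; exacts [h.1, h.2.1]⟩

lemma IOK.mass_le [IsFiniteMeasure μ] (h : IOK μ s r n) :
    (mass (rootMass r) r n : ℝ) ≤ μ.real (cyl (path r n)) := by
  rw [← childMeasure_add]
  exact h.legalSplit.add_le

lemma hist_congr (h : ∀ k < n, r k = r' k) : hist r n = hist r' n :=
  List.map_congr_left fun k hk => h k (List.mem_range.1 hk)

lemma path_congr (h : ∀ k < n, r k = r' k) : path r n = path r' n :=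
  List.map_congr_left fun k hk => by simp [bits, h k (List.mem_range.1 hk)]

lemma sel_congr (h : r n = r' n) : sel r n = sel r' n := by
  simp [sel_eq_pick, bits, h]

lemma mass_congr (h : ∀ k < n, r k = r' k) : mass q₀ r n = mass q₀ r' n := by
  cases n with
  | zero => rfl
  | succ n => exact sel_congr (h n n.lt_succ_self)

lemma IIOK_congr (h : r n = r' n) : IIOK r n ↔ IIOK r' n := by
  rw [IIOK, IIOK, sel_congr h]

lemma IOK_congr (h : ∀ k ≤ n, r k = r' k) : IOK μ s r n ↔ IOK μ s r' n := by
  have hp := path_congr fun k hk => h k hk.le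
  cases n with
  | zero => simp only [IOK, mOK, valI, hp, h 0 le_rfl]
  | succ n => simp only [IOK, mOK, valI, hp, h (n + 1) le_rfl, sel_congr (h n n.le_succ)]

lemma IIWinsRun_of_not_IOK (hII : ∀ k < n, IIOK r k) (hI : ¬ IOK μ s r n) :
    IIWinsRun μ s A r := by
  classical
  have hex : ∃ k, ¬ IOK μ s r k := ⟨n, hI⟩
  have hle : Nat.find hex ≤ n := Nat.find_min' hex hI
  exact Or.inl ⟨Nat.find hex,
    fun k hk => ⟨not_not.1 (Nat.find_min hex hk), hII k (by omega)⟩, Nat.find_spec hex⟩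

lemma IOK_of_not_IIWinsRun (hr : ¬ IIWinsRun μ s A r) (hII : ∀ k < n, IIOK r k) :
    IOK μ s r n :=
  not_not.1 fun hI => hr (IIWinsRun_of_not_IOK hII hI)

lemma IIWinsRun_of_forall_IIOK (hII : ∀ n, (∀ k ≤ n, IOK μ s r k) → IIOK r n)
    (hA : (∀ n, IOK μ s r n) → bits r ∈ A) : IIWinsRun μ s A r := by
  classical
  by_cases hI : ∃ n, ¬ IOK μ s r n
  · refine IIWinsRun_of_not_IOK (fun k hk => hII k fun j hj => ?_) (Nat.find_spec hI)
    exact not_not.1 (Nat.find_min hI (by omega))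
  · push Not at hI
    exact Or.inr ⟨fun n => ⟨hI n, hII n fun k _ => hI k⟩, hA hI⟩

lemma IIWinsRun.forall_IIOK_and_mem (h : IIWinsRun μ s A r) (hI : ∀ n, IOK μ s r n) :
    (∀ n, IIOK r n) ∧ bits r ∈ A := by
  rcases h with ⟨n, -, hn⟩ | ⟨h, hA⟩
  · exact absurd (hI n) hn
  · exact ⟨fun n => (h n).2, hA⟩

end Runs

section Play

def nextRound (σ : StratI) (τ : StratII) (h : List GRound) : GRound := (σ h, τ h (σ h))

def playHist (σ : StratI) (τ : StratII) : ℕ → List GRound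
  | 0 => []
  | n + 1 => playHist σ τ n ++ [nextRound σ τ (playHist σ τ n)]

def play (σ : StratI) (τ : StratII) : Run := fun n => nextRound σ τ (playHist σ τ n)

def playBits (x : Cantor) : StratII := fun h _ => x h.length

lemma hist_play (σ : StratI) (τ : StratII) (n : ℕ) : hist (play σ τ) n = playHist σ τ n := by
  induction n with
  | zero => rfl
  | succ n ih => rw [hist_succ, ih]; rfl

lemma play_apply (σ : StratI) (τ : StratII) (n : ℕ) :
    play σ τ n = (σ (hist (play σ τ) n), τ (hist (play σ τ) n) (σ (hist (play σ τ) n))) := by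
  rw [hist_play]; rfl

@[simp] lemma play_zero_fst (σ : StratI) (τ : StratII) : (play σ τ 0).1 = σ [] := rfl

lemma consI_play (σ : StratI) (τ : StratII) : ConsI σ (play σ τ) := fun n => by
  rw [play_apply]

lemma consII_play (σ : StratI) (τ : StratII) : ConsII τ (play σ τ) := fun n => by
  rw [play_apply]

@[simp] lemma bits_play_playBits (σ : StratI) (x : Cantor) (n : ℕ) :
    bits (play σ (playBits x)) n = x n := by
  simp [bits, play_apply σ, playBits]

variable {σ σ' : StratI} {τ τ' : StratII}

lemma play_congr {n : ℕ} (hσ : ∀ h : List GRound, h.length < n → σ h = σ' h)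
    (hτ : ∀ h c, h.length < n → τ h c = τ' h c) : ∀ k < n, play σ τ k = play σ' τ' k := by
  have hlen : ∀ k, (playHist σ τ k).length = k := fun k => by rw [← hist_play, length_hist]
  have hhist : ∀ k ≤ n, playHist σ τ k = playHist σ' τ' k := by
    intro k hk
    induction k with
    | zero => rfl
    | succ k ih =>
      have hk' : (playHist σ τ k).length < n := by rw [hlen]; omega
      simp only [playHist, nextRound, ← ih (by omega), hσ _ hk', hτ _ _ hk']
  intro k hk
  have hk' : (playHist σ τ k).length < n := by rw [hlen]; omega
  simp only [play, nextRound, ← hhist k hk.le, hσ _ hk', hτ _ _ hk']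

end Play

/-! ### Player I wins from a closed set, player II from an open cover -/

section Splitting

variable (ν : Measure Cantor) [IsFiniteMeasure ν]

noncomputable def chooseSplit (t : List Bool) (m : ℚ) : ℚ × ℚ :=
  Classical.epsilon (LegalSplit (childMeasure ν t) m)

noncomputable def splitStrat (q₀ : ℚ) : StratI :=
  fun h => chooseSplit ν (nodeOf h) (histMass q₀ h)

lemma chooseSplit_spec {t : List Bool} {m : ℚ} (h : Admissible (ν.real (cyl t)) m) :
    LegalSplit (childMeasure ν t) m (chooseSplit ν t m) :=
  Classical.epsilon_spec
    (exists_legalSplit (childMeasure_nonneg ν t) (by rwa [childMeasure_add]))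

lemma legalSplit_of_splitStrat {r : Run} {q₀ : ℚ} {k₀ : ℕ}
    (hr : ∀ k ≥ k₀, (r k).1 = splitStrat ν q₀ (hist r k))
    (h₀ : Admissible (ν.real (cyl (path r k₀))) (mass q₀ r k₀)) :
    ∀ k ≥ k₀, LegalSplit (childMeasure ν (path r k)) (mass q₀ r k) (r k).1 := by
  have hspec : ∀ k ≥ k₀, Admissible (ν.real (cyl (path r k))) (mass q₀ r k) →
      LegalSplit (childMeasure ν (path r k)) (mass q₀ r k) (r k).1 := fun k hk h => by
    rw [hr k hk, splitStrat, nodeOf_hist, histMass_hist]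
    exact chooseSplit_spec ν h
  have hadm : ∀ k ≥ k₀, Admissible (ν.real (cyl (path r k))) (mass q₀ r k) := by
    intro k hk
    induction k, hk using Nat.le_induction with
    | base => exact h₀
    | succ k hk ih =>
      rw [path_succ]
      exact ((hspec k hk ih).2 (bits r k)).admissible
  exact fun k hk => hspec k hk (hadm k hk)

end Splitting

theorem winsI_of_isClosed [IsFiniteMeasure μ] (hs : 0 ≤ s) {F : Set Cantor} (hF : IsClosed F)
    (hFA : F ⊆ Aᶜ) (hsF : s < μ.real F) : WinsI μ s A := by
  obtain ⟨q₀, hsq, hqF⟩ := exists_rat_btwn hsF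
  set ν := μ.restrict F
  have hνμ : ∀ t, ν.real (cyl t) ≤ μ.real (cyl t) := fun t => by
    rw [measureReal_restrict_apply (measurableSet_cyl t)]
    exact measureReal_mono Set.inter_subset_left
  refine ⟨splitStrat ν q₀, fun r hr hwin => ?_⟩
  have hsplit := legalSplit_of_splitStrat ν (k₀ := 0) (fun k _ => hr k)
    ⟨by exact_mod_cast hs.trans hsq.le, fun _ => by simpa [ν, path, mass] using hqF⟩
  have hI : ∀ n, IOK μ s r n := fun n =>
    IOK_of_legalSplit ((hsplit n n.zero_le).mono fun b => hνμ _) hsq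
  obtain ⟨hII, hA⟩ := hwin.forall_IIOK_and_mem hI
  refine hFA (mem_of_forall_cyl_inter_nonempty hF fun n => ?_) hA
  have hv := (hsplit n n.zero_le).2 (bits r n)
  have hpos : (0 : ℝ) < sel r n := by exact_mod_cast lt_of_le_of_ne hv.1 (hII n).symm
  have : 0 < μ.real (cyl (path r (n + 1)) ∩ F) := by
    rw [← measureReal_restrict_apply (measurableSet_cyl _), path_succ]
    exact hpos.trans_le hv.2.1
  exact (nonempty_of_measureReal_ne_zero this.ne').mono
    (Set.inter_subset_inter_left _ (cyl_seg_succ_subset _ n))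

lemma fst_headD_hist (r : Run) (n : ℕ) : ((hist r n).headD ((r n).1, false)).1 = (r 0).1 := by
  cases n with
  | zero => rfl
  | succ n => simp [hist, List.range_succ_eq_map]

/-- Once I's first move has fixed `m_∅ = q₀`, II keeps `μ(N_t ∩ V q₀) < m_t`. -/
noncomputable def coverStrat (μ : Measure Cantor) (V : ℚ → Set Cantor) : StratII := fun h c =>
  let c₀ := (h.headD (c, false)).1
  decide ((c.1 : ℝ) ≤ μ.real (cyl (nodeOf h ++ [false]) ∩ V (c₀.1 + c₀.2)))

lemma measureReal_inter_lt_mass [IsFiniteMeasure μ] {V : ℚ → Set Cantor} {r : Run}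
    (hr : ConsII (coverStrat μ V) r) (hV : MeasurableSet (V (rootMass r)))
    (hμV : μ.real (V (rootMass r)) < rootMass r) (n : ℕ) (hI : ∀ k < n, IOK μ s r k) :
    μ.real (cyl (path r n) ∩ V (rootMass r)) < mass (rootMass r) r n := by
  induction n with
  | zero => simpa [path, mass] using hμV
  | succ n ih =>
    have hsum : ((r n).1.1 : ℝ) + (r n).1.2 = mass (rootMass r) r n := by
      exact_mod_cast (hI n n.lt_succ_self).legalSplit.1
    have hlt := ih fun k hk => hI k (by omega)
    rw [measureReal_cyl_inter μ _ hV] at hlt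
    have hbit : bits r n =
        decide (((r n).1.1 : ℝ) ≤ μ.real (cyl (path r n ++ [false]) ∩ V (rootMass r))) := by
      rw [bits, hr n, ← nodeOf_hist]
      simp only [coverStrat, fst_headD_hist]
      rfl
    show _ < (sel r n : ℝ)
    rw [path_succ, sel_eq_pick, hbit]
    by_cases hc : ((r n).1.1 : ℝ) ≤ μ.real (cyl (path r n ++ [false]) ∩ V (rootMass r))
    · simp only [hc, decide_true, pick_true]
      linarith
    · simp only [hc, decide_false, pick_false]
      linarith

theorem winsII_of_forall_isOpen [IsFiniteMeasure μ]
    (hU : ∀ ε > 0, ∃ U, IsOpen U ∧ Aᶜ ⊆ U ∧ μ.real U < s + ε) : WinsII μ s A := by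
  let V : ℚ → Set Cantor := fun q =>
    Classical.epsilon fun U => IsOpen U ∧ Aᶜ ⊆ U ∧ μ.real U < q
  have hV : ∀ q : ℚ, s < q → IsOpen (V q) ∧ Aᶜ ⊆ V q ∧ μ.real (V q) < q := fun q hq => by
    obtain ⟨U, hUo, hAU, hμU⟩ := hU (q - s) (sub_pos.2 hq)
    exact Classical.epsilon_spec (p := fun U => IsOpen U ∧ Aᶜ ⊆ U ∧ μ.real U < q)
      ⟨U, hUo, hAU, by linarith⟩
  refine ⟨coverStrat μ V, fun r hr => ?_⟩
  by_cases h₀ : IOK μ s r 0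
  swap
  · exact IIWinsRun_of_not_IOK (fun k hk => absurd hk k.not_lt_zero) h₀
  obtain ⟨hVo, hAV, hμV⟩ := hV (rootMass r) (by push_cast [rootMass]; exact h₀.2.2)
  have key := measureReal_inter_lt_mass (s := s) hr hVo.measurableSet hμV
  refine IIWinsRun_of_forall_IIOK (fun n hI hsel => ?_) fun hI => ?_
  · have := key (n + 1) fun k hk => hI k (by omega)
    simp only [mass, hsel, Rat.cast_zero] at this
    exact absurd this (not_lt.2 measureReal_nonneg)
  · by_contra hA
    obtain ⟨N, hN⟩ := exists_cyl_seg_subset hVo (hAV hA)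
    have h₁ := key N fun k _ => hI k
    have h₂ := (hI N).mass_le
    rw [path_eq_seg, Set.inter_eq_left.2 hN] at h₁
    rw [path_eq_seg] at h₂
    linarith

/-! ### Closed sets from winning strategies -/

lemma path_play_playBits (σ : StratI) (x : Cantor) (n : ℕ) :
    path (play σ (playBits x)) n = seg x n := by
  rw [path_eq_seg]
  exact seg_congr fun i _ => bits_play_playBits σ x i

lemma play_playBits_congr {σ : StratI} {x y : Cantor} {n : ℕ} (h : ∀ i < n, x i = y i) :
    ∀ k < n, play σ (playBits x) k = play σ (playBits y) k :=
  play_congr (fun _ _ => rfl) fun _ _ hh => h _ hh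

section WinsI

open Classical in
noncomputable def valueI (σ : StratI) (n : ℕ) (x : Cantor) : ℝ :=
  if ∀ k < n, IIOK (play σ (playBits x)) k then
    (mass ((σ []).1 + (σ []).2) (play σ (playBits x)) n : ℝ)
  else 0

variable {σ : StratI} {n : ℕ} {x y : Cantor}

lemma dependsOn_valueI (σ : StratI) (n : ℕ) : DependsOn (valueI σ n) (Set.Iio n) := by
  classical
  intro x y hxy
  have hrun := play_playBits_congr (σ := σ) hxy
  have hlive : (∀ k < n, IIOK (play σ (playBits x)) k) ↔ ∀ k < n, IIOK (play σ (playBits y)) k :=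
    forall₂_congr fun k hk => IIOK_congr (hrun k hk)
  unfold valueI
  rw [mass_congr hrun]
  exact if_congr hlive rfl rfl

lemma valueI_succ (hx : ∀ k < n, IIOK (play σ (playBits x)) k) :
    valueI σ (n + 1) x = pick (x n) (play σ (playBits x) n).1 := by
  by_cases hxn : IIOK (play σ (playBits x)) n
  · rw [valueI, if_pos fun k hk => (Nat.lt_succ_iff_lt_or_eq.1 hk).elim (hx k) (· ▸ hxn)]
    simp [mass, sel_eq_pick]
  · rw [valueI, if_neg fun h => hxn (h n n.lt_succ_self)]
    simp only [IIOK, sel_eq_pick, bits_play_playBits, ne_eq, not_not] at hxn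
    simp [hxn]

lemma legalSplit_of_winsI (hσ : ∀ r, ConsI σ r → ¬ IIWinsRun μ s A r)
    (hx : ∀ k < n, IIOK (play σ (playBits x)) k) :
    LegalSplit (childMeasure μ (seg x n)) (mass ((σ []).1 + (σ []).2) (play σ (playBits x)) n)
      (play σ (playBits x) n).1 := by
  simpa [path_play_playBits, rootMass] using
    (IOK_of_not_IIWinsRun (hσ _ (consI_play _ _)) hx).legalSplit

lemma valueI_le [IsFiniteMeasure μ] (hσ : ∀ r, ConsI σ r → ¬ IIWinsRun μ s A r) :
    valueI σ n x ≤ μ.real (cyl (seg x n)) := by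
  by_cases hx : ∀ k < n, IIOK (play σ (playBits x)) k
  · rw [valueI, if_pos hx, ← childMeasure_add]
    exact (legalSplit_of_winsI hσ hx).add_le
  · rw [valueI, if_neg hx]
    exact measureReal_nonneg

lemma valueI_eq_add (hσ : ∀ r, ConsI σ r → ¬ IIWinsRun μ s A r) (hxy : ∀ i < n, x i = y i)
    (hx : x n = false) (hy : y n = true) :
    valueI σ n x = valueI σ (n + 1) x + valueI σ (n + 1) y := by
  have hrun := play_playBits_congr (σ := σ) hxy
  by_cases hxl : ∀ k < n, IIOK (play σ (playBits x)) k
  · have hyl : ∀ k < n, IIOK (play σ (playBits y)) k := fun k hk =>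
      (IIOK_congr (hrun k hk)).1 (hxl k hk)
    have hmove : (play σ (playBits y) n).1 = (play σ (playBits x) n).1 := by
      rw [consI_play σ _ n, consI_play σ _ n, hist_congr hrun]
    rw [valueI_succ hxl, valueI_succ hyl, hmove, hx, hy, valueI, if_pos hxl,
      ← (legalSplit_of_winsI hσ hxl).1]
    simp
  · have hyl : ¬ ∀ k < n, IIOK (play σ (playBits y)) k := fun h =>
      hxl fun k hk => (IIOK_congr (hrun k hk)).2 (h k hk)
    simp only [valueI, if_neg hxl, if_neg fun h : ∀ k < n + 1, _ => hxl fun k hk => h k (by omega),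
      if_neg fun h : ∀ k < n + 1, _ => hyl fun k hk => h k (by omega), add_zero]

lemma valueI_ne_zero_of_succ (hσ : ∀ r, ConsI σ r → ¬ IIWinsRun μ s A r)
    (hx : valueI σ (n + 1) x ≠ 0) : valueI σ n x ≠ 0 := by
  have hxl : ∀ k < n + 1, IIOK (play σ (playBits x)) k := by_contra fun h => hx (if_neg h)
  have hxl' : ∀ k < n, IIOK (play σ (playBits x)) k := fun k hk => hxl k (by omega)
  have hsplit := legalSplit_of_winsI hσ hxl'
  rw [valueI_succ hxl'] at hx
  rw [valueI, if_pos hxl']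
  exact_mod_cast (hsplit.pos (lt_of_le_of_ne (hsplit.2 (x n)).1 (by exact_mod_cast hx.symm))).ne'

lemma forall_IIOK_of_forall_valueI (hx : ∀ n, valueI σ n x ≠ 0) :
    ∀ n, IIOK (play σ (playBits x)) n :=
  fun n => by_contra fun h => hx (n + 1) (if_neg fun h' => h (h' n n.lt_succ_self))

lemma notMem_of_forall_valueI (hσ : ∀ r, ConsI σ r → ¬ IIWinsRun μ s A r)
    (hx : ∀ n, valueI σ n x ≠ 0) : x ∉ A := fun hxA => by
  have hII := forall_IIOK_of_forall_valueI hx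
  have hwin := hσ _ (consI_play σ (playBits x))
  refine hwin (Or.inr ⟨fun n => ⟨IOK_of_not_IIWinsRun hwin fun k _ => hII k, hII n⟩, ?_⟩)
  rwa [funext (bits_play_playBits σ x)]

lemma valueI_zero (σ : StratI) (x : Cantor) : valueI σ 0 x = (σ []).1 + (σ []).2 := by
  simp [valueI, mass]

end WinsI

theorem exists_isClosed_of_winsI [IsFiniteMeasure μ] (h : WinsI μ s A) :
    ∃ F, IsClosed F ∧ F ⊆ Aᶜ ∧ s < μ.real F := by
  obtain ⟨σ, hσ⟩ := h
  have hroot : s < (σ []).1 + (σ []).2 := by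
    simpa using (IOK_of_not_IIWinsRun (n := 0)
      (hσ (play σ (playBits fun _ => false)) (consI_play _ _)) nofun).2.2
  have hμ := sub_le_measureReal_setOf_forall_ne_zero μ (valueI σ) le_rfl (dependsOn_valueI σ)
    (fun n x => valueI_le hσ) (fun n x y hxy hx hy => by rw [valueI_eq_add hσ hxy hx hy]; simp)
    (fun n x => valueI_ne_zero_of_succ hσ) fun _ => false
  rw [valueI_zero] at hμ
  exact ⟨_, isClosed_setOf_forall_ne_zero (dependsOn_valueI σ),
    fun x hx => notMem_of_forall_valueI hσ hx, by linarith⟩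

section WinsII

variable {τ : StratII} {q₀ : ℚ}

def IsLegalPlay (μ : Measure Cantor) (τ : StratII) (q₀ : ℚ) (r : Run) (n : ℕ) : Prop :=
  ∀ k < n, (r k).2 = τ (hist r k) (r k).1 ∧
    LegalSplit (childMeasure μ (path r k)) (mass q₀ r k) (r k).1

lemma isLegalPlay_congr {r r' : Run} {n : ℕ} (h : ∀ k < n, r k = r' k) :
    IsLegalPlay μ τ q₀ r n ↔ IsLegalPlay μ τ q₀ r' n :=
  forall₂_congr fun k hk => by
    have h' : ∀ j < k, r j = r' j := fun j hj => h j (hj.trans hk)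
    rw [h k hk, hist_congr h', path_congr h', mass_congr h']

lemma exists_run_of_isLegalPlay [IsFiniteMeasure μ] (hs : s < q₀) {r : Run} {n : ℕ}
    (hr : IsLegalPlay μ τ q₀ r n) {c : ℚ × ℚ}
    (hc : LegalSplit (childMeasure μ (path r n)) (mass q₀ r n) c) :
    ∃ r', ConsII τ r' ∧ hist r' n = hist r n ∧ (r' n).1 = c ∧ ∀ k, IOK μ s r' k := by
  classical
  -- copy `r` before round `n`, play `c` at round `n`, then split legally forever
  let σ : StratI := fun h =>
    if h.length < n then (r h.length).1 else if h.length = n then c else splitStrat μ q₀ h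
  set r' := play σ τ
  have hagree : ∀ k < n, r' k = r k := by
    intro k
    induction k using Nat.strong_induction_on with
    | _ k ih =>
      intro hk
      have hh : hist r' k = hist r k := hist_congr fun j hj => ih j hj (hj.trans hk)
      have h₁ : (r' k).1 = (r k).1 := by rw [consI_play σ τ k, hh]; simp [σ, hk]
      exact Prod.ext h₁ (by rw [consII_play σ τ k, h₁, hh, (hr k hk).1])
  have hhist : hist r' n = hist r n := hist_congr hagree
  have hn : (r' n).1 = c := by rw [consI_play σ τ n, hhist]; simp [σ]
  have hc' : LegalSplit (childMeasure μ (path r' n)) (mass q₀ r' n) (r' n).1 := by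
    rwa [hn, path_congr hagree, mass_congr hagree]
  have hlater := legalSplit_of_splitStrat μ (r := r') (q₀ := q₀) (k₀ := n + 1)
    (fun k hk => by
      rw [consI_play σ τ k]
      simp [σ, show ¬ k < n by omega, show k ≠ n by omega]
      rfl)
    (by rw [path_succ]; exact (hc'.2 _).admissible)
  refine ⟨r', consII_play σ τ, hhist, hn, fun k => ?_⟩
  rcases lt_trichotomy k n with hk | rfl | hk
  · exact (IOK_congr fun j hj => hagree j (by omega)).2 (IOK_of_legalSplit (hr k hk).2 hs)
  · exact IOK_of_legalSplit hc' hs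
  · exact IOK_of_legalSplit (hlater k hk) hs

lemma pick_pos_of_isLegalPlay [IsFiniteMeasure μ] (hτ : ∀ r, ConsII τ r → IIWinsRun μ s A r)
    (hs : s < q₀) {r : Run} {n : ℕ} (hr : IsLegalPlay μ τ q₀ r n) {c : ℚ × ℚ}
    (hc : LegalSplit (childMeasure μ (path r n)) (mass q₀ r n) c) :
    0 < pick (τ (hist r n) c) c := by
  obtain ⟨r', hr', hhist, hn, hI⟩ := exists_run_of_isLegalPlay hs hr hc
  have hII := ((hτ r' hr').forall_IIOK_and_mem hI).1 n
  rw [IIOK, sel_eq_pick, bits, hr' n, hhist, hn] at hII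
  exact lt_of_le_of_ne (hc.2 _).1 hII.symm

variable (μ τ q₀) (ε : ℝ)

noncomputable def splitsAt (h : List GRound) : Finset Bool × (Bool → ℚ × ℚ) :=
  Classical.epsilon
    (GoodSplits (childMeasure μ (nodeOf h)) (histMass q₀ h) (τ h) (ε / 4 ^ h.length))

/-- Along the branch `x`, player I aims each move at the next bit of `x`. -/
noncomputable def treeRun (x : Cantor) : Run :=
  play (fun h => (splitsAt μ τ q₀ ε h).2 (x h.length)) (playBits x)

def InTree (n : ℕ) (x : Cantor) : Prop :=
  IsLegalPlay μ τ q₀ (treeRun μ τ q₀ ε x) n ∧ (∀ k < n, IIOK (treeRun μ τ q₀ ε x) k) ∧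
    0 < mass q₀ (treeRun μ τ q₀ ε x) n ∧
    (mass q₀ (treeRun μ τ q₀ ε x) n : ℝ) < μ.real (cyl (seg x n))

open Classical in
noncomputable def gap (n : ℕ) (x : Cantor) : ℝ :=
  if InTree μ τ q₀ ε n x then μ.real (cyl (seg x n)) - mass q₀ (treeRun μ τ q₀ ε x) n else 0

variable {μ τ q₀ ε} {n : ℕ} {x y : Cantor}

lemma path_treeRun (x : Cantor) (n : ℕ) : path (treeRun μ τ q₀ ε x) n = seg x n :=
  path_play_playBits _ x n

lemma treeRun_fst (x : Cantor) (n : ℕ) : (treeRun μ τ q₀ ε x n).1 =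
    (splitsAt μ τ q₀ ε (hist (treeRun μ τ q₀ ε x) n)).2 (x n) := by
  rw [treeRun, consI_play, length_hist]

@[simp] lemma bits_treeRun (x : Cantor) (n : ℕ) : bits (treeRun μ τ q₀ ε x) n = x n :=
  bits_play_playBits _ x n

lemma treeRun_congr (h : ∀ i < n, x i = y i) :
    ∀ k < n, treeRun μ τ q₀ ε x k = treeRun μ τ q₀ ε y k :=
  play_congr (fun _ hh => by rw [h _ hh]) fun _ _ hh => h _ hh

lemma inTree_congr (h : ∀ i < n, x i = y i) :
    InTree μ τ q₀ ε n x ↔ InTree μ τ q₀ ε n y := by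
  have hr := treeRun_congr (μ := μ) (τ := τ) (q₀ := q₀) (ε := ε) h
  rw [InTree, InTree, isLegalPlay_congr hr, mass_congr hr, seg_congr h,
    forall₂_congr fun k hk => IIOK_congr (hr k hk)]

lemma dependsOn_gap (μ : Measure Cantor) (τ : StratII) (q₀ : ℚ) (ε : ℝ) (n : ℕ) :
    DependsOn (gap μ τ q₀ ε n) (Set.Iio n) := by
  classical
  intro x y h
  unfold gap
  rw [mass_congr (treeRun_congr h), seg_congr h]
  exact if_congr (inTree_congr h) rfl rfl

lemma gap_pos (h : InTree μ τ q₀ ε n x) : 0 < gap μ τ q₀ ε n x := by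
  rw [gap, if_pos h]
  linarith [h.2.2.2]

lemma gap_nonneg : 0 ≤ gap μ τ q₀ ε n x := by
  by_cases h : InTree μ τ q₀ ε n x
  · exact (gap_pos h).le
  · rw [gap, if_neg h]

lemma gap_le : gap μ τ q₀ ε n x ≤ μ.real (cyl (seg x n)) := by
  by_cases h : InTree μ τ q₀ ε n x
  · rw [gap, if_pos h]
    linarith [h.2.2.1, show (0 : ℝ) < mass q₀ (treeRun μ τ q₀ ε x) n from by
      exact_mod_cast h.2.2.1]
  · rw [gap, if_neg h]
    exact measureReal_nonneg

lemma InTree.of_succ [IsFiniteMeasure μ] (h : InTree μ τ q₀ ε (n + 1) x) :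
    InTree μ τ q₀ ε n x := by
  obtain ⟨hplay, hII, -, -⟩ := h
  have hsplit := (hplay n n.lt_succ_self).2
  have hpos : 0 < sel (treeRun μ τ q₀ ε x) n :=
    lt_of_le_of_ne (hsplit.2 _).1 (hII n n.lt_succ_self).symm
  refine ⟨fun k hk => hplay k (by omega), fun k hk => hII k (by omega), hsplit.pos hpos, ?_⟩
  rw [← path_treeRun, ← childMeasure_add]
  exact hsplit.lt_add hpos

lemma gap_ne_zero_of_succ [IsFiniteMeasure μ] (h : gap μ τ q₀ ε (n + 1) x ≠ 0) :
    gap μ τ q₀ ε n x ≠ 0 :=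
  (gap_pos (InTree.of_succ (by_contra fun hg => h (if_neg hg)))).ne'

lemma mem_of_forall_inTree (hτ : ∀ r, ConsII τ r → IIWinsRun μ s A r) (hs : s < q₀)
    (h : ∀ n, InTree μ τ q₀ ε n x) : x ∈ A := by
  set r := treeRun μ τ q₀ ε x
  have hplay : ∀ n, IsLegalPlay μ τ q₀ r (n + 1) := fun n => (h (n + 1)).1
  have hmem := ((hτ r fun n => (hplay n n n.lt_succ_self).1).forall_IIOK_and_mem
    fun n => IOK_of_legalSplit (hplay n n n.lt_succ_self).2 hs).2
  rwa [show bits r = x from funext (bits_treeRun x)] at hmem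

variable [IsFiniteMeasure μ]

lemma InTree.goodSplits (hτ : ∀ r, ConsII τ r → IIWinsRun μ s A r) (hs : s < q₀)
    (hε : 0 < ε) (h : InTree μ τ q₀ ε n x) :
    GoodSplits (childMeasure μ (seg x n)) (mass q₀ (treeRun μ τ q₀ ε x) n)
      (τ (hist (treeRun μ τ q₀ ε x) n)) (ε / 4 ^ n)
      (splitsAt μ τ q₀ ε (hist (treeRun μ τ q₀ ε x) n)) := by
  rw [splitsAt, nodeOf_hist, histMass_hist, length_hist, path_treeRun]
  refine Classical.epsilon_spec (exists_goodSplits (childMeasure_nonneg μ _) h.2.2.1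
    (fun c hc => ?_) (δ := ε / 4 ^ n) (by positivity))
  exact pick_pos_of_isLegalPlay hτ hs h.1 (by rwa [path_treeRun])

lemma InTree.succ (hτ : ∀ r, ConsII τ r → IIWinsRun μ s A r) (hs : s < q₀) (hε : 0 < ε)
    (h : InTree μ τ q₀ ε n x) (hxy : ∀ i < n, x i = y i)
    (hy : y n ∈ (splitsAt μ τ q₀ ε (hist (treeRun μ τ q₀ ε x) n)).1) :
    InTree μ τ q₀ ε (n + 1) y ∧ gap μ τ q₀ ε (n + 1) y = childMeasure μ (seg x n) (y n) -
      pick (y n) ((splitsAt μ τ q₀ ε (hist (treeRun μ τ q₀ ε x) n)).2 (y n)) := by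
  obtain ⟨hτc, hsplit⟩ := (h.goodSplits hτ hs hε).1 (y n) hy
  have hpos := pick_pos_of_isLegalPlay hτ hs h.1 (by rwa [path_treeRun])
  set r := treeRun μ τ q₀ ε x
  set r' := treeRun μ τ q₀ ε y
  set c := (splitsAt μ τ q₀ ε (hist r n)).2 (y n)
  rw [hτc] at hpos
  have hagree : ∀ k < n, r' k = r k := fun k hk => (treeRun_congr hxy k hk).symm
  have hseg : seg y n = seg x n := (seg_congr hxy).symm
  have hmove : (r' n).1 = c := by rw [treeRun_fst, hist_congr hagree]
  have hsel : sel r' n = pick (y n) c := by rw [sel_eq_pick, bits_treeRun, hmove]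
  have hgood : InTree μ τ q₀ ε (n + 1) y := by
    obtain ⟨hplay, hII, -, -⟩ := (inTree_congr hxy).1 h
    refine ⟨fun k hk => ?_, fun k hk => ?_, show 0 < sel r' n from hsel ▸ hpos, ?_⟩
    · rcases Nat.lt_succ_iff_lt_or_eq.1 hk with hk | rfl
      · exact hplay k hk
      · refine ⟨by rw [show (r' k).2 = y k from bits_treeRun y k, hmove, hist_congr hagree, hτc],
          ?_⟩
        rwa [hmove, path_treeRun, hseg, mass_congr hagree]
    · rcases Nat.lt_succ_iff_lt_or_eq.1 hk with hk | rfl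
      · exact hII k hk
      · exact (hsel ▸ hpos).ne'
    · show (sel r' n : ℝ) < _
      rw [hsel, seg_succ, hseg]
      exact (hsplit.2 (y n)).lt_of_pos hpos
  refine ⟨hgood, ?_⟩
  rw [gap, if_pos hgood, seg_succ, hseg]
  show _ - ((sel r' n : ℚ) : ℝ) = _
  rw [hsel]
  rfl

lemma gap_le_add (hτ : ∀ r, ConsII τ r → IIWinsRun μ s A r) (hs : s < q₀) (hε : 0 < ε)
    (hxy : ∀ i < n, x i = y i) (hx : x n = false) (hy : y n = true) :
    gap μ τ q₀ ε n x ≤ gap μ τ q₀ ε (n + 1) x + gap μ τ q₀ ε (n + 1) y + ε / 4 ^ n := by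
  by_cases h : InTree μ τ q₀ ε n x
  swap
  · rw [gap, if_neg h]
    have : 0 ≤ ε / 4 ^ n := by positivity
    linarith [gap_nonneg (μ := μ) (τ := τ) (q₀ := q₀) (ε := ε) (n := n + 1) (x := x),
      gap_nonneg (μ := μ) (τ := τ) (q₀ := q₀) (ε := ε) (n := n + 1) (x := y)]
  set p := splitsAt μ τ q₀ ε (hist (treeRun μ τ q₀ ε x) n)
  let z : Bool → Cantor := fun b => if b then y else x
  have hz : ∀ b, (∀ i < n, x i = z b i) ∧ z b n = b := fun b => by
    cases b
    · simp [z, hx]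
    · exact ⟨by simpa [z] using hxy, by simp [z, hy]⟩
  have hchild : ∀ b ∈ p.1,
      childMeasure μ (seg x n) b - pick b (p.2 b) = gap μ τ q₀ ε (n + 1) (z b) := fun b hb => by
    rw [(h.succ hτ hs hε (hz b).1 (by rwa [(hz b).2])).2, (hz b).2]
  have hsum := (h.goodSplits hτ hs hε).2
  rw [Finset.sum_congr rfl hchild] at hsum
  have hle := Finset.sum_le_univ_sum_of_nonneg (s := p.1)
    (f := fun b => gap μ τ q₀ ε (n + 1) (z b)) fun _ => gap_nonneg
  rw [Fintype.sum_bool] at hle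
  rw [gap, if_pos h, ← childMeasure_add]
  simp only [z, if_true, Bool.false_eq_true, if_false] at hle
  linarith

end WinsII

theorem exists_isClosed_of_winsII [IsProbabilityMeasure μ] (hs₀ : 0 ≤ s) (hs₁ : s < 1)
    (h : WinsII μ s A) {ε : ℝ} (hε : 0 < ε) : ∃ F, IsClosed F ∧ F ⊆ A ∧ 1 - s - ε ≤ μ.real F := by
  obtain ⟨τ, hτ⟩ := h
  obtain ⟨q₀, hsq, hq⟩ := exists_rat_btwn (lt_min hs₁ (lt_add_of_pos_right s (half_pos hε)))
  rw [lt_min_iff] at hq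
  have hq₀ : 0 < q₀ := by exact_mod_cast hs₀.trans_lt hsq
  have hε' : 0 < ε / 4 := by positivity
  refine ⟨{x | ∀ n, gap μ τ q₀ (ε / 4) n x ≠ 0},
    isClosed_setOf_forall_ne_zero (dependsOn_gap μ τ q₀ _), fun x hx =>
      mem_of_forall_inTree hτ hsq fun n => by_contra fun hn => hx n (if_neg hn), ?_⟩
  have := sub_le_measureReal_setOf_forall_ne_zero μ (gap μ τ q₀ (ε / 4)) hε'.le
    (dependsOn_gap μ τ q₀ _) (fun n x => gap_le) (fun n x y => gap_le_add hτ hsq hε')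
    (fun n x => gap_ne_zero_of_succ) fun _ => false
  have hroot : InTree μ τ q₀ (ε / 4) 0 fun _ => false :=
    ⟨nofun, nofun, hq₀, by simpa [mass] using hq.1⟩
  rw [gap, if_pos hroot] at this
  simp only [seg_zero, cyl_nil, probReal_univ, mass] at this
  linarith

/-! ### Inner and outer measure -/

lemma lt_innerM_iff [IsFiniteMeasure μ] {B : Set Cantor} :
    s < innerM μ B ↔ ∃ F, IsClosed F ∧ F ⊆ B ∧ s < μ.real F := by
  have hbdd : BddAbove {v : ℝ | ∃ F : Set Cantor, IsClosed F ∧ F ⊆ B ∧ v = (μ F).toReal} :=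
    ⟨μ.real Set.univ, by rintro _ ⟨F, -, -, rfl⟩; exact measureReal_mono (Set.subset_univ F)⟩
  rw [innerM, lt_csSup_iff hbdd ⟨_, ∅, isClosed_empty, Set.empty_subset _, rfl⟩]
  constructor
  · rintro ⟨_, ⟨F, hF, hFB, rfl⟩, h⟩
    exact ⟨F, hF, hFB, h⟩
  · rintro ⟨F, hF, hFB, h⟩
    exact ⟨_, ⟨F, hF, hFB, rfl⟩, h⟩

lemma outerM_le_iff {B : Set Cantor} :
    outerM μ B ≤ s ↔ ∀ ε > 0, ∃ U, IsOpen U ∧ B ⊆ U ∧ μ.real U < s + ε := by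
  have hbdd : BddBelow {v : ℝ | ∃ U : Set Cantor, IsOpen U ∧ B ⊆ U ∧ v = (μ U).toReal} :=
    ⟨0, by rintro _ ⟨U, -, -, rfl⟩; exact ENNReal.toReal_nonneg⟩
  rw [outerM, Real.sInf_le_iff hbdd ⟨_, Set.univ, isOpen_univ, Set.subset_univ _, rfl⟩]
  constructor
  · intro h ε hε
    obtain ⟨_, ⟨U, hU, hBU, rfl⟩, h⟩ := h ε hε
    exact ⟨U, hU, hBU, h⟩
  · intro h ε hε
    obtain ⟨U, hU, hBU, h⟩ := h ε hε
    exact ⟨_, ⟨U, hU, hBU, rfl⟩, h⟩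

end Game

/-- Martin's theorem: the measure game `G(s, A)` characterizes inner and outer measure:
player I wins `G(s,A)` iff `μ_*(Aᶜ) > s`, and player II wins `G(s,A)` iff `μ*(Aᶜ) ≤ s`. -/
theorem measure_game_characterization (μ : Measure Cantor) [IsProbabilityMeasure μ]
    (A : Set Cantor) (s : ℝ) (hs0 : 0 ≤ s) (hs1 : s < 1) :
    (s < innerM μ Aᶜ ↔ WinsI μ s A) ∧ (outerM μ Aᶜ ≤ s ↔ WinsII μ s A) := by
  constructor
  · rw [lt_innerM_iff]
    exact ⟨fun ⟨F, hF, hFA, hsF⟩ => winsI_of_isClosed hs0 hF hFA hsF, exists_isClosed_of_winsI⟩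
  · rw [outerM_le_iff]
    refine ⟨winsII_of_forall_isOpen, fun h ε hε => ?_⟩
    obtain ⟨F, hF, hFA, hμF⟩ := exists_isClosed_of_winsII hs0 hs1 h (half_pos hε)
    refine ⟨Fᶜ, hF.isOpen_compl, Set.compl_subset_compl.2 hFA, ?_⟩
    rw [measureReal_compl hF.measurableSet, probReal_univ]
    linarith

end MeasureGame
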